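/- arXiv:1907.10590 — 3 statements merged into one kernel-verified Lean document; each statement's English description precedes it below -/
import Mathlib

section
/- Fix an execution of the Eneström–Phragmén procedure and a subset J of candidates. Let p = min{s : w_*[s] ≤ q} (which satisfies p ≤ n), and for s ≤ p let p_{J*}(s) denote the number of seats allocated to members of J* during steps 0,…,s−1. Then y_J[s] ≥ y_J − p_{J*}(s)·q for all s ≤ p, where y_J[s] = Σ_{k : A_k ⊇ J} v_k[s]. -/
/-!
The Eneström–Phragmén procedure.

We fix a number of seats `n ≥ 1`, a finite set `ι` of candidates with capacities
`m i ∈ ℕ∞`, a finite set `κ` of vote types, and for each vote type a positive weight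
`v k` and a nonempty approval set `A k`.  The total vote is `V = ∑ k, v k` and the
(Droop) quota is `q = V / (n + 1)`.  An execution of the procedure is recorded by the
vote weights `vk s k` at each step `s`, the seat counts `seats s i`, and the candidate
`winner s` receiving seat `s + 1` (for `s < n`), subject to the rules of the procedure.
-/

namespace EP

/-- The data of an Eneström–Phragmén election. -/
structure Input (ι κ : Type*) [Fintype ι] [DecidableEq ι] [Fintype κ] : Type _ where
  /-- number of seats -/
  n : ℕ
  hn : 1 ≤ n
  /-- capacities of the candidates -/
  m : ι → ℕ∞
  /-- weights of the vote types -/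
  v : κ → ℝ
  hv : ∀ k, 0 < v k
  /-- approval sets of the vote types -/
  A : κ → Finset ι
  hA : ∀ k, (A k).Nonempty

namespace Input

variable {ι κ : Type*} [Fintype ι] [DecidableEq ι] [Fintype κ] (P : Input ι κ)

/-- Total number of votes. -/
noncomputable def V : ℝ := ∑ k, P.v k

/-- The Droop quota `q = v / (n + 1)`. -/
noncomputable def q : ℝ := P.V / (P.n + 1)

/-- Support of candidate `i` given current vote weights `u`:
`w_i = ∑_{k : i ∈ A_k} u_k`. -/
noncomputable def supp (u : κ → ℝ) (i : ι) : ℝ :=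
  ∑ k ∈ Finset.univ.filter (fun k => i ∈ P.A k), u k

/-- Standing assumption: at least `n` candidates have positive initial support. -/
def enough : Prop := P.n ≤ {i : ι | 0 < P.supp P.v i}.ncard

end Input

/-- An execution of the Eneström–Phragmén procedure: at each step `s < n`,
seat `s + 1` is given to an eligible candidate `winner s` of maximal support, and the
votes approving the winner are reduced according to the quota rule. -/
structure Exec {ι κ : Type*} [Fintype ι] [DecidableEq ι] [Fintype κ]
    (P : Input ι κ) : Type _ where
  /-- the vote weights `v_k[s]` -/
  vk : ℕ → κ → ℝ
  /-- the seat counts `n_i[s]` -/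
  seats : ℕ → ι → ℕ
  /-- the candidate receiving seat `s + 1` -/
  winner : ℕ → ι
  vk_init : vk 0 = P.v
  seats_init : ∀ i, seats 0 i = 0
  /-- the winner is eligible -/
  winner_elig : ∀ s < P.n, (seats s (winner s) : ℕ∞) < P.m (winner s)
  /-- the winner maximizes the support among eligible candidates -/
  winner_max : ∀ s < P.n, ∀ i : ι, (seats s i : ℕ∞) < P.m i →
    P.supp (vk s) i ≤ P.supp (vk s) (winner s)
  seats_succ : ∀ s < P.n, ∀ i : ι,
    seats (s + 1) i = if i = winner s then seats s i + 1 else seats s i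
  /-- vote reduction when the winner has at least a quota -/
  vk_succ_ge : ∀ s < P.n, ∀ k, winner s ∈ P.A k → P.q ≤ P.supp (vk s) (winner s) →
    vk (s + 1) k = (1 - P.q / P.supp (vk s) (winner s)) * vk s k
  /-- vote exhaustion when the winner has less than a quota -/
  vk_succ_lt : ∀ s < P.n, ∀ k, winner s ∈ P.A k → P.supp (vk s) (winner s) < P.q →
    vk (s + 1) k = 0
  /-- votes not approving the winner are unchanged -/
  vk_succ_out : ∀ s < P.n, ∀ k, winner s ∉ P.A k → vk (s + 1) k = vk s k

end EP

/-!
Each step multiplies every vote approving the winner by the same factor `1 - c`, where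
`c = q / w_*` if the winner reaches the quota and `c = 1` otherwise; in both cases `c · w_* ≤ q`.
Hence a set of vote types loses at most `c · w_* ≤ q` of weight in one step, and nothing at all
if none of its types approves the winner. Summing over the steps gives the bound.
-/

namespace EP

theorem Input.q_nonneg {ι κ : Type*} [Fintype ι] [DecidableEq ι] [Fintype κ]
    (P : Input ι κ) : 0 ≤ P.q :=
  div_nonneg (Finset.sum_nonneg fun k _ => (P.hv k).le) (by positivity)

namespace Exec

variable {ι κ : Type*} [Fintype ι] [DecidableEq ι] [Fintype κ] {P : Input ι κ} (E : Exec P)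

noncomputable def consumed (s : ℕ) : ℝ :=
  if P.q ≤ P.supp (E.vk s) (E.winner s) then P.q / P.supp (E.vk s) (E.winner s) else 1

theorem consumed_nonneg (s : ℕ) : 0 ≤ E.consumed s := by
  unfold consumed
  split_ifs
  · exact div_nonneg P.q_nonneg (P.q_nonneg.trans ‹_›)
  · exact zero_le_one

theorem consumed_le_one (s : ℕ) : E.consumed s ≤ 1 := by
  unfold consumed
  split_ifs with h
  · exact div_le_one_of_le₀ h (P.q_nonneg.trans h)
  · exact le_rfl

theorem consumed_mul_supp_le_q (s : ℕ) :
    E.consumed s * P.supp (E.vk s) (E.winner s) ≤ P.q := by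
  unfold consumed
  split_ifs with h
  · rcases eq_or_ne (P.supp (E.vk s) (E.winner s)) 0 with hw | hw
    · simpa [hw] using P.q_nonneg
    · exact (div_mul_cancel₀ _ hw).le
  · simpa using (not_le.mp h).le

theorem vk_succ_of_mem {s : ℕ} (hs : s < P.n) {k : κ} (hk : E.winner s ∈ P.A k) :
    E.vk (s + 1) k = (1 - E.consumed s) * E.vk s k := by
  unfold consumed
  split_ifs with h
  · exact E.vk_succ_ge s hs k hk h
  · simp [E.vk_succ_lt s hs k hk (not_le.mp h)]

theorem vk_nonneg {t : ℕ} (ht : t ≤ P.n) (k : κ) : 0 ≤ E.vk t k := by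
  induction t with
  | zero => simpa [E.vk_init] using (P.hv k).le
  | succ s ih =>
    have hs : s < P.n := ht
    by_cases hk : E.winner s ∈ P.A k
    · rw [E.vk_succ_of_mem hs hk]
      exact mul_nonneg (sub_nonneg.mpr (E.consumed_le_one s)) (ih hs.le)
    · rw [E.vk_succ_out s hs k hk]
      exact ih hs.le

theorem sum_vk_succ_of_forall_notMem {s : ℕ} (hs : s < P.n) {S : Finset κ}
    (hS : ∀ k ∈ S, E.winner s ∉ P.A k) : ∑ k ∈ S, E.vk (s + 1) k = ∑ k ∈ S, E.vk s k :=
  Finset.sum_congr rfl fun k hk => E.vk_succ_out s hs k (hS k hk)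

theorem sum_vk_sub_q_le_sum_vk_succ {s : ℕ} (hs : s < P.n) (S : Finset κ) :
    ∑ k ∈ S, E.vk s k - P.q ≤ ∑ k ∈ S, E.vk (s + 1) k := by
  set w := P.supp (E.vk s) (E.winner s)
  set approving := S.filter (fun k => E.winner s ∈ P.A k)
  have hsplit : ∑ k ∈ S, E.vk (s + 1) k
      = ∑ k ∈ S, E.vk s k - E.consumed s * ∑ k ∈ approving, E.vk s k := by
    rw [← Finset.sum_filter_add_sum_filter_not S (fun k => E.winner s ∈ P.A k) (E.vk (s + 1)),
      ← Finset.sum_filter_add_sum_filter_not S (fun k => E.winner s ∈ P.A k) (E.vk s),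
      Finset.sum_congr rfl fun k hk => E.vk_succ_of_mem hs (Finset.mem_filter.mp hk).2,
      E.sum_vk_succ_of_forall_notMem hs fun k hk => (Finset.mem_filter.mp hk).2,
      ← Finset.mul_sum]
    ring
  have happroving_le : ∑ k ∈ approving, E.vk s k ≤ w :=
    Finset.sum_le_sum_of_subset_of_nonneg
      (Finset.filter_subset_filter _ (Finset.subset_univ S))
      fun k _ _ => E.vk_nonneg hs.le k
  have hloss : E.consumed s * ∑ k ∈ approving, E.vk s k ≤ P.q :=
    (mul_le_mul_of_nonneg_left happroving_le (E.consumed_nonneg s)).trans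
      (E.consumed_mul_supp_le_q s)
  linarith

theorem sum_v_sub_card_mul_q_le_sum_vk (S : Finset κ) {s : ℕ} (hs : s ≤ P.n) :
    ∑ k ∈ S, P.v k - ((Finset.range s).filter
        (fun t => ∃ k ∈ S, E.winner t ∈ P.A k)).card * P.q ≤ ∑ k ∈ S, E.vk s k := by
  induction s with
  | zero => simp [E.vk_init]
  | succ s ih =>
    have hsn : s < P.n := hs
    rw [Finset.range_add_one, Finset.filter_insert]
    split_ifs with hwin
    · rw [Finset.card_insert_of_notMem (by simp)]
      push_cast
      linarith [ih hsn.le, E.sum_vk_sub_q_le_sum_vk_succ hsn S]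
    · rw [E.sum_vk_succ_of_forall_notMem hsn fun k hk h => hwin ⟨k, hk, h⟩]
      exact ih hsn.le

end Exec

end EP

open EP in
theorem enestrom_phragmen_yJ_lower_bound_general
    {ι κ : Type*} [Fintype ι] [DecidableEq ι] [Fintype κ]
    (P : Input ι κ) (E : Exec P) (J : Finset ι)
    (p : ℕ) (hpn : p ≤ P.n) :
    ∀ s ≤ p,
      (∑ k ∈ Finset.univ.filter (fun k => J ⊆ P.A k), P.v k) -
        (((Finset.range s).filter
            (fun t => ∃ k, J ⊆ P.A k ∧ E.winner t ∈ P.A k)).card : ℝ) * P.q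
      ≤ ∑ k ∈ Finset.univ.filter (fun k => J ⊆ P.A k), E.vk s k := by
  intro s hs
  simpa only [Finset.mem_filter, Finset.mem_univ, true_and] using
    E.sum_v_sub_card_mul_q_le_sum_vk (Finset.univ.filter (fun k => J ⊆ P.A k)) (hs.trans hpn)

open EP in
/-- fix an execution and a subset `J`.  Let `p = min {s : w_*[s] ≤ q}`
(characterized by: `p ≤ n`, at every earlier step the winner's support exceeds `q`, and
at step `p` every eligible candidate has support at most `q`).  Then for all `s ≤ p`,
`y_J[s] ≥ y_J - p_{J*}(s) · q`, where `p_{J*}(s)` is the number of seats allocated to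
members of `J* = ⋃ {A_k : A_k ⊇ J}` during steps `0, …, s - 1`. -/
theorem enestrom_phragmen_yJ_lower_bound
    {ι κ : Type*} [Fintype ι] [DecidableEq ι] [Fintype κ]
    (P : Input ι κ) (henough : P.enough) (E : Exec P) (J : Finset ι)
    (p : ℕ) (hpn : p ≤ P.n)
    (hmin : ∀ s < p, P.q < P.supp (E.vk s) (E.winner s))
    (hp : ∀ i : ι, (E.seats p i : ℕ∞) < P.m i → P.supp (E.vk p) i ≤ P.q) :
    ∀ s ≤ p,
      (∑ k ∈ Finset.univ.filter (fun k => J ⊆ P.A k), P.v k) -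
        (((Finset.range s).filter
            (fun t => ∃ k, J ⊆ P.A k ∧ E.winner t ∈ P.A k)).card : ℝ) * P.q
      ≤ ∑ k ∈ Finset.univ.filter (fun k => J ⊆ P.A k), E.vk s k :=
  enestrom_phragmen_yJ_lower_bound_general P E J p hpn
end

section
/- Monotonicity for individual candidates: assume all candidates have capacity m_i = 1. Fix a candidate i and a second approval profile (A'_k) on the same vote types with the same weights v_k, such that A'_k \ {i} = A_k \ {i} for every k (no candidate other than i gains or loses approvals), A_k ⊆ A'_k for every k, and i ∈ A'_k \ A_k for at least one k with v_k > 0 (so the support of i strictly increases while every other candidate's support is unchanged). If some execution of the Eneström–Phragmén procedure on the profile (A_k) elects i, then there exists an execution of the procedure on the profile (A'_k) that elects i. -/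
/-!
Let `t` be the step at which the given execution elects `i`.  Approving `i` more changes
no support except that of `i`, which can only grow, so in the new profile `i` is a valid
winner at step `t` of the old execution, and possibly already earlier.  Let `t₀ ≤ t` be the
first step of the old execution at which `i` would be a valid winner in the new profile.
Before `t₀` every old winner is still a valid winner in the new profile, and the vote
updates coincide, so the new execution can copy the old one up to `t₀`, elect `i` at `t₀`,
and then be completed greedily: the old execution seats `n` distinct candidates, so there
are at least `n` of them and some candidate is always still eligible.
-/

theorem Finset.mem_iff_mem_of_erase_eq_erase {α : Type*} [DecidableEq α]
    {s t : Finset α} {i j : α} (h : s.erase i = t.erase i) (hj : j ≠ i) : j ∈ s ↔ j ∈ t := by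
  simpa [hj] using congrArg (j ∈ ·) h

namespace EP

variable {ι κ : Type*} [Fintype ι] [DecidableEq ι] [Fintype κ]

namespace Input

variable (P : Input ι κ)

def Eligible (c : ι → ℕ) (j : ι) : Prop := (c j : ℕ∞) < P.m j

def IsMaxEligible (c : ι → ℕ) (u : κ → ℝ) (j : ι) : Prop :=
  P.Eligible c j ∧ ∀ l, P.Eligible c l → P.supp u l ≤ P.supp u j

/-- A state is the pair (vote weights, seat counts). -/
noncomputable def step (w : ι) (st : (κ → ℝ) × (ι → ℕ)) : (κ → ℝ) × (ι → ℕ) :=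
  (fun k => if w ∈ P.A k then
      (if P.q ≤ P.supp st.1 w then (1 - P.q / P.supp st.1 w) * st.1 k else 0)
    else st.1 k,
   fun j => if j = w then st.2 j + 1 else st.2 j)

noncomputable def run (pick : ℕ → (κ → ℝ) × (ι → ℕ) → ι) : ℕ → (κ → ℝ) × (ι → ℕ)
  | 0 => (P.v, 0)
  | s + 1 => P.step (pick s (run pick s)) (run pick s)

noncomputable def maxEligible [Nonempty ι] (c : ι → ℕ) (u : κ → ℝ) : ι :=
  Classical.epsilon (P.IsMaxEligible c u)

variable {P}

theorem q_nonneg_s11 : 0 ≤ P.q :=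
  div_nonneg (Finset.sum_nonneg fun k _ => (P.hv k).le) (by positivity)

theorem eligible_iff_eq_zero (hm : ∀ j, P.m j = 1) {c : ι → ℕ} {j : ι} :
    P.Eligible c j ↔ c j = 0 := by
  rw [Eligible, hm, Nat.cast_lt_one]

theorem isMaxEligible_maxEligible [Nonempty ι] {c : ι → ℕ} {u : κ → ℝ}
    (h : ∃ j, P.Eligible c j) : P.IsMaxEligible c u (P.maxEligible c u) := by
  classical
  obtain ⟨j, hj⟩ := h
  obtain ⟨w, hw, hmax⟩ := (Finset.univ.filter (P.Eligible c)).exists_max_image (P.supp u)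
    ⟨j, Finset.mem_filter.2 ⟨Finset.mem_univ j, hj⟩⟩
  refine Classical.epsilon_spec ⟨w, (Finset.mem_filter.1 hw).2, fun l hl => hmax l ?_⟩
  exact Finset.mem_filter.2 ⟨Finset.mem_univ l, hl⟩

theorem sum_ite_eq_succ (c : ι → ℕ) (w : ι) :
    ∑ j, (if j = w then c j + 1 else c j) = ∑ j, c j + 1 := by
  have h : ∀ j, (if j = w then c j + 1 else c j) = c j + if j = w then 1 else 0 := fun j => by
    split_ifs <;> rfl
  simp [h, Finset.sum_add_distrib]

theorem sum_run_seats (pick : ℕ → (κ → ℝ) × (ι → ℕ) → ι) (s : ℕ) :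
    ∑ j, (P.run pick s).2 j = s := by
  induction s with
  | zero => simp [run]
  | succ s ih => rw [run, step, sum_ite_eq_succ, ih]

theorem exists_eligible_run (hm : ∀ j, P.m j = 1) (pick : ℕ → (κ → ℝ) × (ι → ℕ) → ι)
    {s : ℕ} (hs : s < Fintype.card ι) : ∃ j, P.Eligible (P.run pick s).2 j := by
  have : ∑ j, (P.run pick s).2 j < ∑ _j : ι, 1 := by
    rw [sum_run_seats, Finset.sum_const, Finset.card_univ, smul_eq_mul, mul_one]
    exact hs
  obtain ⟨j, -, hj⟩ := Finset.exists_lt_of_sum_lt this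
  exact ⟨j, (eligible_iff_eq_zero hm).2 (Nat.lt_one_iff.1 hj)⟩

end Input

section Congr

variable {P P' : Input ι κ}

theorem Input.supp_congr {j : ι} (hA : ∀ k, j ∈ P'.A k ↔ j ∈ P.A k) (u : κ → ℝ) :
    P'.supp u j = P.supp u j := by
  unfold Input.supp
  congr 1
  ext k
  simp [hA]

theorem Input.supp_le_supp {j : ι} (hA : ∀ k, j ∈ P.A k → j ∈ P'.A k) {u : κ → ℝ}
    (hu : ∀ k, 0 ≤ u k) :
    P.supp u j ≤ P'.supp u j :=
  Finset.sum_le_sum_of_subset_of_nonneg (fun k hk => by simpa using hA k (by simpa using hk))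
    fun k _ _ => hu k

theorem Input.step_congr {w : ι} (hq : P'.q = P.q) (hA : ∀ k, w ∈ P'.A k ↔ w ∈ P.A k) :
    P'.step w = P.step w := by
  funext st
  simp only [Input.step, hA, hq, Input.supp_congr hA]

theorem Input.eligible_congr (hm : P'.m = P.m) : P'.Eligible = P.Eligible := by
  unfold Input.Eligible
  rw [hm]

variable {i w : ι} {c : ι → ℕ} {u : κ → ℝ}

theorem Input.IsMaxEligible.of_supp_le (hm : P'.m = P.m)
    (hsupp : ∀ j, j ≠ i → P'.supp u j = P.supp u j) (h : P.IsMaxEligible c u i)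
    (hle : P.supp u i ≤ P'.supp u i) : P'.IsMaxEligible c u i := by
  refine ⟨by rw [Input.eligible_congr hm]; exact h.1, fun l hl => ?_⟩
  rw [Input.eligible_congr hm] at hl
  rcases eq_or_ne l i with rfl | hli
  · exact le_rfl
  · exact (hsupp l hli).trans_le ((h.2 l hl).trans hle)

/-- Some eligible candidate other than `i` beats `i`, and `w` beats that candidate. -/
theorem Input.IsMaxEligible.of_not_isMaxEligible (hm : P'.m = P.m)
    (hsupp : ∀ j, j ≠ i → P'.supp u j = P.supp u j) (h : P.IsMaxEligible c u w) (hwi : w ≠ i)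
    (hi : ¬ P'.IsMaxEligible c u i) : P'.IsMaxEligible c u w := by
  have hle : ∀ l, P.Eligible c l → l ≠ i → P'.supp u l ≤ P'.supp u w := fun l hl hli => by
    rw [hsupp l hli, hsupp w hwi]
    exact h.2 l hl
  refine ⟨by rw [Input.eligible_congr hm]; exact h.1, fun l hl => ?_⟩
  rw [Input.eligible_congr hm] at hl
  rcases eq_or_ne l i with rfl | hli
  · simp only [Input.IsMaxEligible, Input.eligible_congr hm, hl, true_and, not_forall,
      not_le] at hi
    obtain ⟨l', hl', hlt⟩ := hi
    exact hlt.le.trans (hle l' hl' (by rintro rfl; exact lt_irrefl _ hlt))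
  · exact hle l hl hli

end Congr

noncomputable def Exec.ofRun (P : Input ι κ) (pick : ℕ → (κ → ℝ) × (ι → ℕ) → ι)
    (h : ∀ s < P.n, P.IsMaxEligible (P.run pick s).2 (P.run pick s).1 (pick s (P.run pick s))) :
    Exec P where
  vk s := (P.run pick s).1
  seats s := (P.run pick s).2
  winner s := pick s (P.run pick s)
  vk_init := rfl
  seats_init _ := rfl
  winner_elig s hs := (h s hs).1
  winner_max s hs := (h s hs).2
  seats_succ _ _ _ := rfl
  vk_succ_ge _ _ _ hk hq := by simp only [Input.run, Input.step, if_pos hk, if_pos hq]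
  vk_succ_lt _ _ _ hk hq := by simp only [Input.run, Input.step, if_pos hk, if_neg hq.not_ge]
  vk_succ_out _ _ _ hk := by simp only [Input.run, Input.step, if_neg hk]

namespace Exec

variable {P : Input ι κ} (E : Exec P)

theorem isMaxEligible_winner {s : ℕ} (hs : s < P.n) :
    P.IsMaxEligible (E.seats s) (E.vk s) (E.winner s) :=
  ⟨E.winner_elig s hs, E.winner_max s hs⟩

theorem step_winner {s : ℕ} (hs : s < P.n) :
    P.step (E.winner s) (E.vk s, E.seats s) = (E.vk (s + 1), E.seats (s + 1)) := by
  refine Prod.ext (funext fun k => ?_) (funext fun j => (E.seats_succ s hs j).symm)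
  by_cases hk : E.winner s ∈ P.A k
  · by_cases hq : P.q ≤ P.supp (E.vk s) (E.winner s)
    · simp only [Input.step, if_pos hk, if_pos hq, E.vk_succ_ge s hs k hk hq]
    · simp only [Input.step, if_pos hk, if_neg hq, E.vk_succ_lt s hs k hk (not_le.1 hq)]
  · simp only [Input.step, if_neg hk, E.vk_succ_out s hs k hk]

theorem vk_nonneg_s11 : ∀ s ≤ P.n, ∀ k, 0 ≤ E.vk s k
  | 0, _ => E.vk_init ▸ fun k => (P.hv k).le
  | s + 1, hs => fun k => by
    have ih := vk_nonneg_s11 s (by omega)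
    rw [show E.vk (s + 1) = (P.step (E.winner s) (E.vk s, E.seats s)).1 by
      rw [E.step_winner (by omega)]]
    dsimp only [Input.step]
    split_ifs with hk hq
    · have hw : P.q / P.supp (E.vk s) (E.winner s) ≤ 1 :=
        div_le_one_of_le₀ hq (Input.q_nonneg_s11.trans hq)
      exact mul_nonneg (by linarith) (ih k)
    · exact le_rfl
    · exact ih k

theorem seats_eq_zero_of_forall_winner_ne {j : ι} :
    ∀ s ≤ P.n, (∀ r < s, E.winner r ≠ j) → E.seats s j = 0
  | 0, _, _ => E.seats_init j
  | s + 1, hs, h => by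
    rw [E.seats_succ s (by omega), if_neg (h s (by omega)).symm,
      seats_eq_zero_of_forall_winner_ne s (by omega) fun r hr => h r (by omega)]

theorem exists_winner_eq_of_seats_ne_zero {j : ι} (h : E.seats P.n j ≠ 0) :
    ∃ s, s < P.n ∧ E.winner s = j := by
  by_contra! hne
  exact h (E.seats_eq_zero_of_forall_winner_ne _ le_rfl hne)

theorem seats_le_one (hm : ∀ j, P.m j = 1) (j : ι) : ∀ s ≤ P.n, E.seats s j ≤ 1
  | 0, _ => (E.seats_init j).trans_le zero_le_one
  | s + 1, hs => by
    rw [E.seats_succ s (by omega)]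
    split_ifs with hj
    · subst hj
      have := (Input.eligible_iff_eq_zero hm).1 (E.winner_elig s (by omega))
      omega
    · exact seats_le_one hm j s (by omega)

theorem seats_mono {j : ι} {a b : ℕ} (hab : a ≤ b) (hb : b ≤ P.n) : E.seats a j ≤ E.seats b j := by
  induction b, hab using Nat.le_induction with
  | base => exact le_rfl
  | succ b _ ih =>
    refine (ih (by omega)).trans ?_
    rw [E.seats_succ b (by omega)]
    split_ifs <;> omega

theorem seats_eq_one_of_winner_eq (hm : ∀ j, P.m j = 1) {s : ℕ} {j : ι} (hs : s < P.n)
    (h : E.winner s = j) : E.seats P.n j = 1 := by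
  have hwon : E.seats (s + 1) j = 1 := by
    rw [E.seats_succ s hs, if_pos h.symm, ← h,
      (Input.eligible_iff_eq_zero hm).1 (E.winner_elig s hs)]
  exact le_antisymm (E.seats_le_one hm j _ le_rfl) (hwon ▸ E.seats_mono hs le_rfl)

theorem sum_seats : ∀ s ≤ P.n, ∑ j, E.seats s j = s
  | 0, _ => by simp [E.seats_init]
  | s + 1, hs => by
    simp only [E.seats_succ s (by omega), Input.sum_ite_eq_succ, sum_seats s (by omega)]

theorem n_le_card (E : Exec P) (hm : ∀ j, P.m j = 1) : P.n ≤ Fintype.card ι :=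
  calc P.n = ∑ j, E.seats P.n j := (E.sum_seats _ le_rfl).symm
    _ ≤ ∑ _j : ι, 1 := Finset.sum_le_sum fun j _ => E.seats_le_one hm j _ le_rfl
    _ = Fintype.card ι := by simp

end Exec

theorem Exec.run_eq_of_eq_winner {P P' : Input ι κ} (E : Exec P) (hv : P'.v = P.v)
    (hq : P'.q = P.q) {w : ℕ → ι} {r : ℕ} (hr : r ≤ P.n) (hw : ∀ s < r, w s = E.winner s)
    (hA : ∀ s < r, ∀ k, w s ∈ P'.A k ↔ w s ∈ P.A k) :
    ∀ s ≤ r, P'.run (fun s _ => w s) s = (E.vk s, E.seats s)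
  | 0, _ => by rw [Input.run, hv, E.vk_init, funext E.seats_init]; rfl
  | s + 1, hs => by
    rw [Input.run, run_eq_of_eq_winner E hv hq hr hw hA s (by omega),
      Input.step_congr hq (hA s (by omega)), hw s (by omega), E.step_winner (by omega)]

namespace Input

variable {P : Input ι κ}

theorem run_congr {pick pick' : ℕ → (κ → ℝ) × (ι → ℕ) → ι} {r : ℕ}
    (h : ∀ s < r, pick s = pick' s) : ∀ s ≤ r, P.run pick s = P.run pick' s
  | 0, _ => rfl
  | s + 1, hs => by rw [run, run, run_congr h s (by omega), h s (by omega)]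

theorem exists_exec_of_prefix [Nonempty ι] (hm : ∀ j, P.m j = 1)
    (hcard : P.n ≤ Fintype.card ι) (w : ℕ → ι) {r : ℕ}
    (hw : ∀ s < r,
      P.IsMaxEligible (P.run (fun s _ => w s) s).2 (P.run (fun s _ => w s) s).1 (w s)) :
    ∃ E : Exec P, ∀ s < r, E.winner s = w s := by
  let pick s (st : (κ → ℝ) × (ι → ℕ)) := if s < r then w s else P.maxEligible st.2 st.1
  have hrun : ∀ s ≤ r, P.run pick s = P.run (fun s _ => w s) s :=
    run_congr fun s hs => funext fun _ => if_pos hs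
  refine ⟨Exec.ofRun P pick fun s hs => ?_, fun s hs => if_pos hs⟩
  by_cases hsr : s < r
  · simpa only [pick, if_pos hsr, hrun s hsr.le] using hw s hsr
  · simp only [pick, if_neg hsr]
    exact isMaxEligible_maxEligible (exists_eligible_run hm pick (hs.trans_le hcard))

end Input

end EP

open EP in
theorem enestrom_phragmen_monotonicity_individual_general
    {ι κ : Type*} [Fintype ι] [DecidableEq ι] [Fintype κ]
    (P P' : Input ι κ) (i : ι)
    (hn : P'.n = P.n)
    (hm : ∀ j, P.m j = 1) (hm' : ∀ j, P'.m j = 1)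
    (hv : P'.v = P.v)
    (hsub : ∀ k, P.A k ⊆ P'.A k)
    (hother : ∀ k, (P.A k).erase i = (P'.A k).erase i)
    (E : Exec P) (hi : E.seats P.n i = 1) :
    ∃ E' : Exec P', E'.seats P'.n i = 1 := by
  have hA : ∀ j, j ≠ i → ∀ k, j ∈ P'.A k ↔ j ∈ P.A k := fun j hj k =>
    Finset.mem_iff_mem_of_erase_eq_erase (hother k).symm hj
  have hsupp u : ∀ j, j ≠ i → P'.supp u j = P.supp u j := fun j hj => Input.supp_congr (hA j hj) u
  have hmm : P'.m = P.m := funext fun j => (hm' j).trans (hm j).symm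
  have hq : P'.q = P.q := by simp only [Input.q, Input.V, hv, hn]
  obtain ⟨t, ⟨htn, hti⟩, ht⟩ := exists_minimal_of_wellFoundedLT _
    (E.exists_winner_eq_of_seats_ne_zero (hi.trans_ne one_ne_zero))
  have hbefore s (hs : s < t) : E.winner s ≠ i := fun h =>
    (ht ⟨hs.trans htn, h⟩ hs.le).not_gt hs
  obtain ⟨t₀, ⟨ht₀, hmax⟩, ht₀min⟩ := exists_minimal_of_wellFoundedLT
    (fun s => s ≤ t ∧ P'.IsMaxEligible (E.seats s) (E.vk s) i)
    ⟨t, le_rfl, (hti ▸ E.isMaxEligible_winner htn).of_supp_le hmm (hsupp _)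
      (Input.supp_le_supp (fun k hk => hsub k hk) (E.vk_nonneg_s11 t htn.le))⟩
  let w s := if s < t₀ then E.winner s else i
  have hrun := E.run_eq_of_eq_winner hv hq (w := w) (r := t₀) (by omega) (fun s hs => if_pos hs)
    fun s hs => by simpa only [w, if_pos hs] using hA _ (hbefore s (by omega))
  have : Nonempty ι := ⟨i⟩
  obtain ⟨E', hE'⟩ := P'.exists_exec_of_prefix hm' (hn ▸ E.n_le_card hm) w
    (r := t₀ + 1) fun s hs => by
      rw [hrun s (by omega)]
      rcases (Nat.lt_succ_iff.1 hs).lt_or_eq with hs | rfl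
      · simp only [w, if_pos hs]
        exact (E.isMaxEligible_winner (by omega)).of_not_isMaxEligible hmm (hsupp _)
          (hbefore s (by omega)) fun h => (ht₀min ⟨by omega, h⟩ hs.le).not_gt hs
      · simpa only [w, lt_irrefl, if_false] using hmax
  exact ⟨E', E'.seats_eq_one_of_winner_eq hm' (by omega)
    ((hE' t₀ (by omega)).trans (if_neg (lt_irrefl _)))⟩

open EP in
/-- monotonicity for individual candidates: assume all capacities are
one.  Let `P'` be a second profile on the same vote types with the same number of seats
and the same weights, in which no candidate other than `i` gains or loses approvals
(`A'_k \ {i} = A_k \ {i}`), every approval set only grows (`A_k ⊆ A'_k`), and `i` gains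
the approval of at least one vote type (all of which have positive weight).  If some
execution on `P` elects `i`, then some execution on `P'` elects `i`. -/
theorem enestrom_phragmen_monotonicity_individual
    {ι κ : Type*} [Fintype ι] [DecidableEq ι] [Fintype κ]
    (P P' : Input ι κ) (i : ι)
    (hn : P'.n = P.n)
    (hm : ∀ j, P.m j = 1) (hm' : ∀ j, P'.m j = 1)
    (hv : P'.v = P.v)
    (hsub : ∀ k, P.A k ⊆ P'.A k)
    (hother : ∀ k, (P.A k).erase i = (P'.A k).erase i)
    (hstrict : ∃ k, i ∈ P'.A k ∧ i ∉ P.A k)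
    (henough : P.enough) (henough' : P'.enough)
    (E : Exec P) (hi : E.seats P.n i = 1) :
    ∃ E' : Exec P', E'.seats P'.n i = 1 :=
  enestrom_phragmen_monotonicity_individual_general P P' i hn hm hm' hv hsub hother E hi
end

section
/- In the two-party setting with ζ[0] > 0, in any execution of the Eneström–Phragmén procedure a tie can occur at most once: if α[s] = β[s] for some s ≤ n, then α[s'] ≠ β[s'] for every s' with s < s' ≤ n. -/
/-!
The Eneström–Phragmén procedure in the two-party setting: the candidates are two
parties `A` and `B` of unlimited capacity, and the vote types are `{A}`, `{B}` and
`{A,B}` with step-`s` weights (divided by the total vote `v`) denoted `α s`, `β s`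
and `ζ s` respectively; `ρ n = q / v = 1 / (n + 1)` is the normalized Droop quota.
At step `s < n`, seat `s + 1` goes to `A` (recorded by `toA s = true`) or to `B`
(`toA s = false`); the winner must maximize the support (`α s + ζ s` for `A`,
`β s + ζ s` for `B`), and the votes approving the winner are reduced according
to the quota rule.
-/

namespace EP2

/-- The normalized Droop quota `ρ = q / v = 1 / (n + 1)`. -/
noncomputable def ρ (n : ℕ) : ℝ := 1 / (n + 1)

/-- An execution of the Eneström–Phragmén procedure in the two-party setting, with
`n` seats and initial normalized weights `α0, β0, ζ0` of the vote types
`{A}`, `{B}`, `{A,B}`. -/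
structure TPExec (n : ℕ) (α0 β0 ζ0 : ℝ) : Type where
  /-- normalized weight of the votes approving only `A` -/
  α : ℕ → ℝ
  /-- normalized weight of the votes approving only `B` -/
  β : ℕ → ℝ
  /-- normalized weight of the votes approving both `A` and `B` -/
  ζ : ℕ → ℝ
  /-- `toA s = true` iff seat `s + 1` is allocated to party `A` -/
  toA : ℕ → Bool
  init_α : α 0 = α0
  init_β : β 0 = β0
  init_ζ : ζ 0 = ζ0
  /-- the winner maximizes the support: if `A` wins then `β s + ζ s ≤ α s + ζ s` -/
  choiceA : ∀ s < n, toA s = true → β s ≤ α s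
  /-- the winner maximizes the support: if `B` wins then `α s + ζ s ≤ β s + ζ s` -/
  choiceB : ∀ s < n, toA s = false → α s ≤ β s
  stepA_ge : ∀ s < n, toA s = true → ρ n ≤ α s + ζ s →
    α (s + 1) = (1 - ρ n / (α s + ζ s)) * α s ∧
    ζ (s + 1) = (1 - ρ n / (α s + ζ s)) * ζ s
  stepA_lt : ∀ s < n, toA s = true → α s + ζ s < ρ n →
    α (s + 1) = 0 ∧ ζ (s + 1) = 0
  stepA_β : ∀ s < n, toA s = true → β (s + 1) = β s
  stepB_ge : ∀ s < n, toA s = false → ρ n ≤ β s + ζ s →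
    β (s + 1) = (1 - ρ n / (β s + ζ s)) * β s ∧
    ζ (s + 1) = (1 - ρ n / (β s + ζ s)) * ζ s
  stepB_lt : ∀ s < n, toA s = false → β s + ζ s < ρ n →
    β (s + 1) = 0 ∧ ζ (s + 1) = 0
  stepB_α : ∀ s < n, toA s = false → α (s + 1) = α s

/-- Number of seats allocated to party `A` during steps `a, …, b - 1`. -/
def cntA {n : ℕ} {α0 β0 ζ0 : ℝ} (E : TPExec n α0 β0 ζ0) (a b : ℕ) : ℕ :=
  ((Finset.Ico a b).filter (fun s => E.toA s = true)).card

/-- Number of seats allocated to party `B` during steps `a, …, b - 1`. -/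
def cntB {n : ℕ} {α0 β0 ζ0 : ℝ} (E : TPExec n α0 β0 ζ0) (a b : ℕ) : ℕ :=
  ((Finset.Ico a b).filter (fun s => E.toA s = false)).card

/-- Total number of seats allocated to party `A`. -/
def nA {n : ℕ} {α0 β0 ζ0 : ℝ} (E : TPExec n α0 β0 ζ0) : ℕ := cntA E 0 n

end EP2

/-!
The winner of a seat has its two vote types scaled by a common factor, so `ζ = K α β`
throughout, with `K = ζ[0] / (α[0] β[0]) > 0`; hence a seat won with weight `a` against weight
`b` lowers `a` by exactly `ρ / (1 + K b)`. Just after a tie the gap is this drop, and by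
induction the gap stays in `(0, ρ / (1 + K max(α, β))]`: the leader wins, and since `K > 0` its
drop `ρ / (1 + K b)` exceeds the gap, so it falls strictly behind, by at most that drop.
-/

namespace EP2

theorem ρ_pos (n : ℕ) : 0 < ρ n := by
  unfold ρ; positivity

theorem two_mul_ρ_le_one_sub {n m : ℕ} (hm : m < n) : 2 * ρ n ≤ 1 - m * ρ n := by
  have hmn : (m : ℝ) + 1 ≤ n := by exact_mod_cast hm
  have hρ : ((n : ℝ) + 1) * ρ n = 1 := by unfold ρ; field_simp
  nlinarith [ρ_pos n]

/-- `R / (1 + K * max a b)` is the amount by which the trailing party's weight would drop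
if it took the next seat. -/
def GapBound (K R a b : ℝ) : Prop := |a - b| ≤ R / (1 + K * max a b)

namespace GapBound

variable {K R a b : ℝ}

theorem symm (h : GapBound K R a b) : GapBound K R b a := by
  rwa [GapBound, abs_sub_comm, max_comm]

theorem of_eq (hK : 0 ≤ K) (hR : 0 ≤ R) (ha : 0 ≤ a) : GapBound K R a a := by
  rw [GapBound, sub_self, abs_zero, max_self]
  exact div_nonneg hR (add_nonneg zero_le_one (mul_nonneg hK ha))

/-- Since `K > 0`, the leader's drop `R / (1 + K * b)` exceeds the bound `R / (1 + K * a)` on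
the gap, so the leader falls strictly behind. -/
theorem step (hK : 0 < K) (hR : 0 < R) (hb : 0 ≤ b) (hba : b ≤ a) (h : GapBound K R a b) :
    a - R / (1 + K * b) < b ∧ GapBound K R (a - R / (1 + K * b)) b := by
  rw [GapBound, max_eq_left hba, abs_of_nonneg (sub_nonneg.2 hba)] at h
  have hden : 0 < 1 + K * b := by positivity
  have hdrop : a - b < R / (1 + K * b) := by
    rcases hba.eq_or_lt with hab | hab
    · linarith [div_pos hR hden]
    · exact h.trans_lt (div_lt_div_of_pos_left hR hden (by gcongr))
  have hlt : a - R / (1 + K * b) < b := by linarith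
  refine ⟨hlt, ?_⟩
  rw [GapBound, max_eq_right hlt.le, abs_of_neg (sub_neg.2 hlt)]
  linarith

end GapBound

namespace TPExec

variable {n : ℕ} {α0 β0 ζ0 : ℝ}

/-- The same execution with the roles of the two parties exchanged. -/
@[simps]
def swap (E : TPExec n α0 β0 ζ0) : TPExec n β0 α0 ζ0 where
  α := E.β
  β := E.α
  ζ := E.ζ
  toA s := !E.toA s
  init_α := E.init_β
  init_β := E.init_α
  init_ζ := E.init_ζ
  choiceA s hs h := E.choiceB s hs (by simpa using h)
  choiceB s hs h := E.choiceA s hs (by simpa using h)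
  stepA_ge s hs h := E.stepB_ge s hs (by simpa using h)
  stepA_lt s hs h := E.stepB_lt s hs (by simpa using h)
  stepA_β s hs h := E.stepB_α s hs (by simpa using h)
  stepB_ge s hs h := E.stepA_ge s hs (by simpa using h)
  stepB_lt s hs h := E.stepA_lt s hs (by simpa using h)
  stepB_α s hs h := E.stepA_β s hs (by simpa using h)

variable (E : TPExec n α0 β0 ζ0) (K : ℝ)

/-- `ζ / (α * β)` keeps its initial value `K` because the seat winner's two vote types are
scaled by the same factor while the loser's type is untouched. -/
structure Invariant (m : ℕ) : Prop where
  α_nonneg : 0 ≤ E.α m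
  β_nonneg : 0 ≤ E.β m
  total : E.α m + E.β m + E.ζ m = 1 - m * ρ n
  ζ_eq : E.ζ m = K * (E.α m * E.β m)

variable {E K} {m : ℕ}

theorem Invariant.swap (h : E.Invariant K m) : E.swap.Invariant K m where
  α_nonneg := h.β_nonneg
  β_nonneg := h.α_nonneg
  total := by simp only [swap_α, swap_β, swap_ζ]; linarith [h.total]
  ζ_eq := by simp only [swap_α, swap_β, swap_ζ]; rw [h.ζ_eq, mul_comm (E.α m)]

theorem Invariant.of_swap (h : E.swap.Invariant K m) : E.Invariant K m where
  α_nonneg := h.β_nonneg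
  β_nonneg := h.α_nonneg
  total := by have := h.total; simp only [swap_α, swap_β, swap_ζ] at this; linarith
  ζ_eq := by have := h.ζ_eq; simp only [swap_α, swap_β, swap_ζ] at this; rw [this, mul_comm (E.β m)]

theorem Invariant.ζ_nonneg (hK : 0 ≤ K) (h : E.Invariant K m) : 0 ≤ E.ζ m := by
  rw [h.ζ_eq]; exact mul_nonneg hK (mul_nonneg h.α_nonneg h.β_nonneg)

/-- The winner's support is at least half of the remaining weight, which is at least `2 ρ`,
so the winner's votes are always scaled, never zeroed. -/
theorem Invariant.ρ_le_support_of_toA (hK : 0 ≤ K) (h : E.Invariant K m) (hm : m < n)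
    (hA : E.toA m = true) : ρ n ≤ E.α m + E.ζ m := by
  have hβα := E.choiceA m hm hA
  linarith [two_mul_ρ_le_one_sub hm, h.total, h.ζ_nonneg hK]

theorem Invariant.succ_of_toA (hK : 0 ≤ K) (h : E.Invariant K m) (hm : m < n)
    (hA : E.toA m = true) : E.Invariant K (m + 1) := by
  have hsupp := h.ρ_le_support_of_toA hK hm hA
  obtain ⟨hα, hζ⟩ := E.stepA_ge m hm hA hsupp
  have hβ := E.stepA_β m hm hA
  have hscale : 0 ≤ 1 - ρ n / (E.α m + E.ζ m) :=
    sub_nonneg.2 (div_le_one_of_le₀ hsupp ((ρ_pos n).le.trans hsupp))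
  refine ⟨hα ▸ mul_nonneg hscale h.α_nonneg, hβ ▸ h.β_nonneg, ?_, ?_⟩
  · have hspent : (1 - ρ n / (E.α m + E.ζ m)) * (E.α m + E.ζ m) = E.α m + E.ζ m - ρ n := by
      field_simp [((ρ_pos n).trans_le hsupp).ne']
    push_cast
    linear_combination hα + hβ + hζ + hspent + h.total
  · rw [hα, hβ, hζ, h.ζ_eq]; ring

theorem Invariant.succ (hK : 0 ≤ K) (h : E.Invariant K m) (hm : m < n) :
    E.Invariant K (m + 1) := by
  cases hA : E.toA m
  · exact (h.swap.succ_of_toA hK hm (by simp [hA])).of_swap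
  · exact h.succ_of_toA hK hm hA

theorem invariant (hα0 : 0 < α0) (hβ0 : 0 < β0) (hζ0 : 0 ≤ ζ0) (hsum : α0 + β0 + ζ0 = 1) :
    ∀ m ≤ n, E.Invariant (ζ0 / (α0 * β0)) m := by
  intro m
  induction m with
  | zero =>
    intro _
    refine ⟨E.init_α.symm ▸ hα0.le, E.init_β.symm ▸ hβ0.le, ?_, ?_⟩
    · rw [E.init_α, E.init_β, E.init_ζ, hsum]; simp
    · rw [E.init_α, E.init_β, E.init_ζ]; field_simp
  | succ m ih =>
    intro hm
    exact (ih (Nat.le_of_succ_le hm)).succ (by positivity) hm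

theorem Invariant.α_succ_of_toA (hK : 0 ≤ K) (h : E.Invariant K m) (hm : m < n)
    (hA : E.toA m = true) : E.α (m + 1) = E.α m - ρ n / (1 + K * E.β m) := by
  have hsupp := h.ρ_le_support_of_toA hK hm hA
  have hα : E.α m ≠ 0 := by
    rintro hα
    rw [h.ζ_eq, hα] at hsupp
    linarith [ρ_pos n]
  have hden : 1 + K * E.β m ≠ 0 := by have := h.β_nonneg; positivity
  rw [(E.stepA_ge m hm hA hsupp).1, h.ζ_eq]
  field_simp

theorem Invariant.gapBound_succ_of_toA (hK : 0 < K) (h : E.Invariant K m) (hm : m < n)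
    (hA : E.toA m = true) (hgap : GapBound K (ρ n) (E.α m) (E.β m)) :
    E.α (m + 1) ≠ E.β (m + 1) ∧ GapBound K (ρ n) (E.α (m + 1)) (E.β (m + 1)) := by
  rw [h.α_succ_of_toA hK.le hm hA, E.stepA_β m hm hA]
  obtain ⟨hlt, hgap'⟩ := hgap.step hK (ρ_pos n) h.β_nonneg (E.choiceA m hm hA)
  exact ⟨hlt.ne, hgap'⟩

theorem Invariant.gapBound_succ (hK : 0 < K) (h : E.Invariant K m) (hm : m < n)
    (hgap : GapBound K (ρ n) (E.α m) (E.β m)) :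
    E.α (m + 1) ≠ E.β (m + 1) ∧ GapBound K (ρ n) (E.α (m + 1)) (E.β (m + 1)) := by
  cases hA : E.toA m
  · obtain ⟨hne, hgap'⟩ := h.swap.gapBound_succ_of_toA hK hm (by simp [hA]) hgap.symm
    exact ⟨hne.symm, hgap'.symm⟩
  · exact h.gapBound_succ_of_toA hK hm hA hgap

end TPExec

end EP2

open EP2 in
theorem enestrom_phragmen_two_party_tie_at_most_once_general
    (n : ℕ) (α0 β0 ζ0 : ℝ)
    (hα0 : 0 < α0) (hβ0 : 0 < β0) (hζ0 : 0 < ζ0) (hsum : α0 + β0 + ζ0 = 1)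
    (E : TPExec n α0 β0 ζ0) (s : ℕ) (htie : E.α s = E.β s) :
    ∀ s', s < s' → s' ≤ n → E.α s' ≠ E.β s' := by
  set K := ζ0 / (α0 * β0)
  have hK : 0 < K := by positivity
  have hinv := E.invariant hα0 hβ0 hζ0.le hsum
  have hgap : ∀ m, s ≤ m → m ≤ n → GapBound K (ρ n) (E.α m) (E.β m) := by
    intro m hsm
    induction m, hsm using Nat.le_induction with
    | base => intro hs; exact htie ▸ GapBound.of_eq hK.le (ρ_pos n).le (hinv s hs).α_nonneg
    | succ m _ ih =>
      intro (hm : m < n)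
      exact ((hinv m hm.le).gapBound_succ hK hm (ih hm.le)).2
  rintro (_ | t) hst htn
  · omega
  · exact ((hinv t (by omega)).gapBound_succ hK htn (hgap t (by omega) (by omega))).1

open EP2 in
/-- Remark 4.1 of the paper: in the two-party setting with `ζ[0] > 0`,
in any execution a tie can occur at most once: if `α[s] = β[s]` for some `s ≤ n`, then
`α[s'] ≠ β[s']` for every `s'` with `s < s' ≤ n`. -/
theorem enestrom_phragmen_two_party_tie_at_most_once
    (n : ℕ) (hn : 1 ≤ n) (α0 β0 ζ0 : ℝ)
    (hα0 : 0 < α0) (hβ0 : 0 < β0) (hζ0 : 0 < ζ0) (hsum : α0 + β0 + ζ0 = 1)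
    (E : TPExec n α0 β0 ζ0) (s : ℕ) (hs : s ≤ n) (htie : E.α s = E.β s) :
    ∀ s', s < s' → s' ≤ n → E.α s' ≠ E.β s' :=
  enestrom_phragmen_two_party_tie_at_most_once_general n α0 β0 ζ0 hα0 hβ0 hζ0 hsum E s htie
end
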